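/- Suppose G is a connected graph with n > 1 vertices and let M = M[IAS(G)]. Then the following are equivalent: (1) M is not 3-connected, i.e. τ(M) ≤ 2; (2) M is not cyclically 3-connected, i.e. κ*(M) ≤ 2; (3) M has a circuit of size 2; (4) G has a pendant vertex or a pair of twin vertices. -/

import Mathlib

open scoped ENat

variable {V : Type*} [Fintype V] [DecidableEq V]

/-- The column of the matrix `IAS(G) = (I | A | A+I)` indexed by `(v, i)`:
`i = 0` gives `φ(v)` (identity column), `i = 1` gives `χ(v)` (column of `A`),
`i = 2` gives `ψ(v)` (column of `A + I`). -/
def iasCol (A : Matrix V V (ZMod 2)) : V × Fin 3 → V → ZMod 2 :=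
  fun p w =>
    if p.2 = 0 then (if w = p.1 then 1 else 0)
    else if p.2 = 1 then A w p.1
    else A w p.1 + (if w = p.1 then 1 else 0)

/-- The rank of a subset of the ground set `W(G) = V × Fin 3` of the isotropic
matroid: the GF(2)-rank of the corresponding set of columns. -/
noncomputable def iasRank (A : Matrix V V (ZMod 2)) (S : Set (V × Fin 3)) : ℕ :=
  Module.finrank (ZMod 2) (Submodule.span (ZMod 2) (iasCol A '' S))

/-- The connectivity function `λ(S) = r(S) + r(W - S) - r(M)`. -/
noncomputable def iasLambda (A : Matrix V V (ZMod 2)) (S : Set (V × Fin 3)) : ℕ :=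
  iasRank A S + iasRank A Sᶜ - iasRank A Set.univ

/-- Independence in the isotropic matroid. -/
def iasIndep (A : Matrix V V (ZMod 2)) (S : Set (V × Fin 3)) : Prop :=
  LinearIndependent (ZMod 2) (fun s : S => iasCol A s.1)

/-- Circuits of the isotropic matroid: minimal dependent sets. -/
def iasCircuit (A : Matrix V V (ZMod 2)) (C : Set (V × Fin 3)) : Prop :=
  ¬ iasIndep A C ∧ ∀ S ⊂ C, iasIndep A S

/-- An ordinary `k`-separation: `λ(S) < k` and `|S|, |W - S| ≥ k`. -/
def OrdinarySep (A : Matrix V V (ZMod 2)) (k : ℕ) (S : Set (V × Fin 3)) : Prop :=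
  0 < k ∧ iasLambda A S < k ∧ k ≤ S.ncard ∧ k ≤ Sᶜ.ncard

/-- A cyclic `k`-separation: `λ(S) < k` and both `S` and `W - S` are dependent. -/
def CyclicSep (A : Matrix V V (ZMod 2)) (k : ℕ) (S : Set (V × Fin 3)) : Prop :=
  0 < k ∧ iasLambda A S < k ∧ ¬ iasIndep A S ∧ ¬ iasIndep A Sᶜ

/-- A vertical `k`-separation: `λ(S) < k` and `r(S), r(W - S) ≥ k`. -/
def VerticalSep (A : Matrix V V (ZMod 2)) (k : ℕ) (S : Set (V × Fin 3)) : Prop :=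
  0 < k ∧ iasLambda A S < k ∧ k ≤ iasRank A S ∧ k ≤ iasRank A Sᶜ

/-- `τ(M) = min {k : M has an ordinary k-separation}`, with `min ∅ = ∞`. -/
noncomputable def iasTau (A : Matrix V V (ZMod 2)) : ℕ∞ :=
  sInf {k : ℕ∞ | ∃ m : ℕ, (m : ℕ∞) = k ∧ ∃ S, OrdinarySep A m S}

/-- `κ*(M) = min ({k : M has a cyclic k-separation} ∪ {|W| - r(M)})`. -/
noncomputable def iasKappaStar (A : Matrix V V (ZMod 2)) : ℕ :=
  sInf ({k : ℕ | ∃ S, CyclicSep A k S} ∪ {3 * Fintype.card V - iasRank A Set.univ})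

/-- `κ(M) = min ({k : M has a vertical k-separation} ∪ {r(M)})`. -/
noncomputable def iasKappa (A : Matrix V V (ZMod 2)) : ℕ :=
  sInf ({k : ℕ | ∃ S, VerticalSep A k S} ∪ {iasRank A Set.univ})

/-- The simple graph underlying a looped simple graph given by its adjacency matrix. -/
def toSimpleGraph (A : Matrix V V (ZMod 2)) : SimpleGraph V where
  Adj v w := v ≠ w ∧ A v w = 1 ∧ A w v = 1
  symm := ⟨fun v w ⟨h1, h2, h3⟩ => ⟨Ne.symm h1, h3, h2⟩⟩
  loopless := ⟨fun v h => h.1 rfl⟩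

/-- The open neighborhood `N_G(v)`. -/
def nbhd (A : Matrix V V (ZMod 2)) (v : V) : Set V := {u | u ≠ v ∧ A v u = 1}

/-- `v` is a pendant vertex: `N_G(v) = {w}` for some `w`. -/
def IsPendant (A : Matrix V V (ZMod 2)) (v : V) : Prop := ∃ w, nbhd A v = {w}

/-- `G` has a pair of twin vertices: `v ≠ w` with `N_G(v) - {w} = N_G(w) - {v}`. -/
def HasTwins (A : Matrix V V (ZMod 2)) : Prop :=
  ∃ v w, v ≠ w ∧ nbhd A v \ {w} = nbhd A w \ {v}

/-- The cut-rank `c_G(X)`: the GF(2)-rank of the submatrix `A[V - X, X]`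
(columns indexed by `X`, rows indexed by `V - X`). -/
noncomputable def cutRank (A : Matrix V V (ZMod 2)) (X : Set V) : ℕ :=
  Module.finrank (ZMod 2)
    (Submodule.span (ZMod 2) ((fun x : V => fun w : ↥(Xᶜ) => A w.1 x) '' X))

/-- `τ_G(X) = ⋃_{x ∈ X} τ_G(x)`, the union of the vertex triples of members of `X`. -/
def tauSet (X : Set V) : Set (V × Fin 3) := {p | p.1 ∈ X}

/-- Loop complementation at `v`. -/
def loopComp (A : Matrix V V (ZMod 2)) (v : V) : Matrix V V (ZMod 2) :=
  fun x y => A x y + if x = v ∧ y = v then 1 else 0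

/-- Simple local complementation at `v`. -/
def simpleLocalComp (A : Matrix V V (ZMod 2)) (v : V) : Matrix V V (ZMod 2) :=
  fun x y => A x y +
    if x ≠ y ∧ (x ≠ v ∧ A v x = 1) ∧ (y ≠ v ∧ A v y = 1) then 1 else 0

/-- Non-simple local complementation at `v`. -/
def nonSimpleLocalComp (A : Matrix V V (ZMod 2)) (v : V) : Matrix V V (ZMod 2) :=
  fun x y => simpleLocalComp A v x y + if x = y ∧ x ≠ v ∧ A v x = 1 then 1 else 0

/-- One local move. -/
def LocalStep (A B : Matrix V V (ZMod 2)) : Prop :=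
  ∃ v, B = loopComp A v ∨ B = simpleLocalComp A v ∨ B = nonSimpleLocalComp A v

/-- Local equivalence: a finite sequence of loop complementations and
(simple or non-simple) local complementations. -/
def LocallyEquiv (A B : Matrix V V (ZMod 2)) : Prop :=
  Relation.ReflTransGen LocalStep A B

/-- `G` has a split: a bipartition `(V₁, V₂)` of `V` with `|V₁|, |V₂| ≥ 2` such that the
GF(2)-rank of `A[V₁, V₂]` is at most 1. -/
def HasSplit (A : Matrix V V (ZMod 2)) : Prop :=
  ∃ X : Set V, 2 ≤ X.ncard ∧ 2 ≤ Xᶜ.ncard ∧ cutRank A X ≤ 1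

/-- A transverse circuit: a circuit of the isotropic matroid meeting each
vertex triple at most once. -/
def IsTransverseCircuit (A : Matrix V V (ZMod 2)) (C : Set (V × Fin 3)) : Prop :=
  iasCircuit A C ∧ ∀ p ∈ C, ∀ q ∈ C, p.1 = q.1 → p = q

/-- An isotropic `k`-separation of `G`: `|X|, |V - X| ≥ k` and `c_G(X) < k`. -/
def IsotropicSep (A : Matrix V V (ZMod 2)) (k : ℕ) (X : Set V) : Prop :=
  k ≤ X.ncard ∧ k ≤ Xᶜ.ncard ∧ cutRank A X < k

/-- The isotropic connectivity `κ_B(G)`, with `min ∅ = ∞`. -/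
noncomputable def kappaB (A : Matrix V V (ZMod 2)) : ℕ∞ :=
  sInf {j : ℕ∞ | ∃ k : ℕ, (k : ℕ∞) = j ∧ ∃ X, IsotropicSep A k X}

/-- The 5-cycle `C₅`. -/
def C5mat : Matrix (Fin 5) (Fin 5) (ZMod 2) :=
  fun i j => if (i.val + 1) % 5 = j.val ∨ (j.val + 1) % 5 = i.val then 1 else 0

/-- The wheel `W₅` : a 5-cycle on `{0,…,4}` plus a hub `5` adjacent to all. -/
def W5mat : Matrix (Fin 6) (Fin 6) (ZMod 2) :=
  fun i j =>
    if (i.val = 5 ∧ j.val ≠ 5) ∨ (j.val = 5 ∧ i.val ≠ 5) then 1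
    else if i.val ≠ 5 ∧ j.val ≠ 5 ∧ ((i.val + 1) % 5 = j.val ∨ (j.val + 1) % 5 = i.val) then 1
    else 0

/-! Over GF(2) the three columns `φ(v) = e_v`, `χ(v)`, `ψ(v) = χ(v) + e_v` of a vertex sum to
zero, so any two of them span the third; and as the `φ`-columns span everything,
`λ(S) = r(S) + r(Sᶜ) - n`. In a connected graph with `n > 1` no column vanishes, so a 2-circuit
is a pair of equal columns. Comparing entries, `φ(v) = χ(w)` or `ψ(w)` says that `w` is pendant
on `v`, and equal `χ`/`ψ`-columns of `v ≠ w` say that `v` and `w` are twins.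

If `λ(S) ≤ 1`, every vertex has two of its three elements on one side of `S`, so its whole triple
lies in the span of that side. Let `P` be the vertices whose triple lies in the span of `S`. If
`P` and `Pᶜ` are both nonempty, an edge between them gives `r(S) > |P|` and `r(Sᶜ) > |Pᶜ|`, so
`λ(S) ≥ 2`. Hence one side, say `Sᶜ`, spans everything, `λ(S) = r(S) ≤ 1`, and two elements of
`S` are parallel. A 2-circuit is a cyclic 2-separation because its complement has `3n - 2 > n`
elements; conversely dependent sets have at least two elements, so cyclic separations of order
at most 2 are ordinary. -/

lemma zmod_two_eq_zero_or_one (x : ZMod 2) : x = 0 ∨ x = 1 := by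
  revert x
  decide

section Columns

open Submodule

variable {V : Type*} [DecidableEq V] (A : Matrix V V (ZMod 2))

lemma iasCol_zero (v : V) : iasCol A (v, 0) = Pi.single v 1 := by
  funext w
  simp [iasCol, Pi.single_apply]

lemma iasCol_apply_of_ne {j : Fin 3} (hj : j ≠ 0) {u v : V} (huv : u ≠ v) :
    iasCol A (v, j) u = A u v := by
  fin_cases j <;> simp_all [iasCol]

lemma iasCol_add_iasCol (v : V) {a b d : Fin 3} (hab : a ≠ b) (had : a ≠ d) (hbd : b ≠ d) :
    iasCol A (v, a) + iasCol A (v, b) = iasCol A (v, d) := by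
  have hchar : ∀ x y : ZMod 2, x + (x + y) = y ∧ x + y + x = y ∧ x + y + y = x := by decide
  funext w
  fin_cases a <;> fin_cases b <;> fin_cases d <;> simp_all [iasCol, add_comm]

lemma iasCol_apply_diag (v u : V) (a : ZMod 2) :
    iasCol A (v, if A v v = a then 1 else 2) u = if u = v then a else A u v := by
  have hchar : ∀ x y : ZMod 2, x ≠ y → x + 1 = y := by decide
  split_ifs with hv hu hu <;> simp_all [iasCol]
  exact hchar _ _ hv

variable {A}

lemma iasCol_mem_span_of_mem_of_mem {X : Set (V × Fin 3)} {v : V} {a b : Fin 3} (hab : a ≠ b)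
    (ha : (v, a) ∈ X) (hb : (v, b) ∈ X) (j : Fin 3) :
    iasCol A (v, j) ∈ span (ZMod 2) (iasCol A '' X) := by
  by_cases hja : j = a
  · exact subset_span ⟨_, hja ▸ ha, rfl⟩
  by_cases hjb : j = b
  · exact subset_span ⟨_, hjb ▸ hb, rfl⟩
  rw [← iasCol_add_iasCol A v hab (Ne.symm hja) (Ne.symm hjb)]
  exact add_mem (subset_span ⟨_, ha, rfl⟩) (subset_span ⟨_, hb, rfl⟩)

lemma forall_iasCol_mem_span_or_compl (S : Set (V × Fin 3)) (v : V) :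
    (∀ j, iasCol A (v, j) ∈ span (ZMod 2) (iasCol A '' S)) ∨
      ∀ j, iasCol A (v, j) ∈ span (ZMod 2) (iasCol A '' Sᶜ) := by
  have pigeonhole : ∀ p : Fin 3 → Prop, ∃ a b, a ≠ b ∧ (p a ↔ p b) := by
    intro p
    by_cases h01 : p 0 ↔ p 1
    · exact ⟨0, 1, by decide, h01⟩
    by_cases h02 : p 0 ↔ p 2
    · exact ⟨0, 2, by decide, h02⟩
    · exact ⟨1, 2, by decide, by tauto⟩
  obtain ⟨a, b, hab, hiff⟩ := pigeonhole fun j => (v, j) ∈ S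
  by_cases ha : (v, a) ∈ S
  · exact .inl (iasCol_mem_span_of_mem_of_mem hab ha (hiff.1 ha))
  · exact .inr (iasCol_mem_span_of_mem_of_mem hab ha (mt hiff.2 ha))

lemma iasCol_ne_zero [Nontrivial V] (hconn : (toSimpleGraph A).Connected) (p : V × Fin 3) :
    iasCol A p ≠ 0 := by
  obtain ⟨v, j⟩ := p
  obtain ⟨u, hvu, -, huv⟩ := hconn.preconnected.exists_adj_of_nontrivial v
  intro h
  by_cases hj : j = 0
  · simpa [hj, iasCol_zero] using congrFun h v
  · simpa [iasCol_apply_of_ne A hj (Ne.symm hvu), huv] using congrFun h u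

end Columns

section ParallelPairs

variable {V : Type*} [DecidableEq V] {A : Matrix V V (ZMod 2)}

lemma nbhd_eq_singleton_iff (hA : A.IsSymm) {v w : V} :
    nbhd A v = {w} ↔ w ≠ v ∧ ∀ u, u ≠ v → A u v = if u = w then 1 else 0 := by
  have h01 : ∀ (x : ZMod 2) (P : Prop) [Decidable P],
      (x = 1 ↔ P) ↔ x = if P then 1 else 0 := by
    intro x P _
    rcases zmod_two_eq_zero_or_one x with rfl | rfl <;> by_cases hP : P <;> simp [hP]
  simp only [Set.ext_iff, nbhd, Set.mem_ofPred_eq, Set.mem_singleton_iff]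
  constructor
  · intro h
    refine ⟨((h w).2 rfl).1, fun u huv => ?_⟩
    rw [hA.apply, ← h01]
    simpa [huv] using h u
  · rintro ⟨hwv, h⟩ u
    by_cases huv : u = v
    · simp [huv, Ne.symm hwv]
    · rw [← hA.apply, h u huv]
      simp [huv]

lemma hasTwins_iff (hA : A.IsSymm) :
    HasTwins A ↔ ∃ v w, v ≠ w ∧ ∀ u, u ≠ v → u ≠ w → A u v = A u w := by
  have h01 : ∀ x y : ZMod 2, (x = 1 ↔ y = 1) ↔ x = y := by decide
  refine exists₂_congr fun v w => and_congr_right fun hvw => ?_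
  simp only [Set.ext_iff, nbhd, Set.mem_sdiff, Set.mem_ofPred_eq, Set.mem_singleton_iff]
  refine forall_congr' fun u => ?_
  by_cases huv : u = v
  · simp [huv]
  by_cases huw : u = w
  · simp [huw]
  simp [huv, huw, hA.apply, h01]

lemma IsPendant.exists_iasCol_eq (hA : A.IsSymm) {v : V} (h : IsPendant A v) :
    ∃ p q, p ≠ q ∧ iasCol A p = iasCol A q := by
  obtain ⟨w, hw⟩ := h
  obtain ⟨hwv, hcol⟩ := (nbhd_eq_singleton_iff hA).1 hw
  refine ⟨(v, if A v v = 0 then 1 else 2), (w, 0), fun h => hwv (congrArg Prod.fst h).symm, ?_⟩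
  funext u
  rw [iasCol_apply_diag, iasCol_zero, Pi.single_apply]
  split_ifs with huv huw huw
  · exact absurd (huv.symm.trans huw) hwv.symm
  · rfl
  · simpa [huw] using hcol u huv
  · simpa [huw] using hcol u huv

lemma HasTwins.exists_iasCol_eq (hA : A.IsSymm) (h : HasTwins A) :
    ∃ p q, p ≠ q ∧ iasCol A p = iasCol A q := by
  obtain ⟨v, w, hvw, hcol⟩ := (hasTwins_iff hA).1 h
  -- the χ/ψ-columns of `v` and `w` whose diagonal entries are both changed to `A v w`
  refine ⟨(v, if A v v = A v w then 1 else 2), (w, if A w w = A v w then 1 else 2),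
    fun h => hvw (congrArg Prod.fst h), ?_⟩
  funext u
  rw [iasCol_apply_diag, iasCol_apply_diag]
  by_cases huv : u = v
  · simp [huv, hvw]
  by_cases huw : u = w
  · simp [huw, Ne.symm hvw, hA.apply]
  simp [huv, huw, hcol u huv huw]

lemma isPendant_of_iasCol_zero_eq (hA : A.IsSymm) {v w : V} (hvw : v ≠ w) {j : Fin 3}
    (hj : j ≠ 0) (h : iasCol A (v, 0) = iasCol A (w, j)) : IsPendant A w := by
  refine ⟨v, (nbhd_eq_singleton_iff hA).2 ⟨hvw, fun u huw => ?_⟩⟩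
  have := congrFun h u
  rwa [iasCol_zero, iasCol_apply_of_ne A hj huw, Pi.single_apply, eq_comm] at this

lemma isPendant_or_hasTwins_of_iasCol_eq (hA : A.IsSymm) (hnz : ∀ p, iasCol A p ≠ 0)
    {p q : V × Fin 3} (hpq : p ≠ q) (h : iasCol A p = iasCol A q) :
    (∃ v, IsPendant A v) ∨ HasTwins A := by
  obtain ⟨v, i⟩ := p
  obtain ⟨w, j⟩ := q
  by_cases hvw : v = w
  · subst hvw
    have hij : i ≠ j := fun hij => hpq (hij ▸ rfl)
    obtain ⟨k, hik, hjk⟩ := (by decide : ∀ i j : Fin 3, ∃ k, i ≠ k ∧ j ≠ k) i j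
    refine absurd ?_ (hnz (v, k))
    rw [← iasCol_add_iasCol A v hij hik hjk, h]
    funext u
    exact CharTwo.add_self_eq_zero _
  by_cases hi : i = 0 <;> by_cases hj : j = 0
  · subst hi hj
    simpa [iasCol_zero, Pi.single_apply, hvw] using congrFun h v
  · exact .inl ⟨w, isPendant_of_iasCol_zero_eq hA hvw hj (hi ▸ h)⟩
  · exact .inl ⟨v, isPendant_of_iasCol_zero_eq hA (Ne.symm hvw) hi (hj ▸ h.symm)⟩
  · refine .inr ((hasTwins_iff hA).2 ⟨v, w, hvw, fun u huv huw => ?_⟩)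
    simpa [iasCol_apply_of_ne A hi huv, iasCol_apply_of_ne A hj huw] using congrFun h u

lemma exists_iasCol_eq_iff (hA : A.IsSymm) (hnz : ∀ p, iasCol A p ≠ 0) :
    (∃ p q, p ≠ q ∧ iasCol A p = iasCol A q) ↔ (∃ v, IsPendant A v) ∨ HasTwins A := by
  refine ⟨fun ⟨p, q, hpq, h⟩ => isPendant_or_hasTwins_of_iasCol_eq hA hnz hpq h, ?_⟩
  rintro (⟨v, hv⟩ | h)
  exacts [hv.exists_iasCol_eq hA, h.exists_iasCol_eq hA]

end ParallelPairs

section Matroid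

variable {V : Type*} [DecidableEq V] {A : Matrix V V (ZMod 2)}

lemma iasIndep_of_subsingleton (hnz : ∀ p, iasCol A p ≠ 0) {S : Set (V × Fin 3)}
    (hS : S.Subsingleton) : iasIndep A S := by
  obtain rfl | ⟨p, rfl⟩ := hS.eq_empty_or_singleton
  · exact linearIndepOn_empty _ _
  · exact (linearIndepOn_singleton_iff _).2 (hnz p)

lemma two_le_ncard_of_not_iasIndep (hnz : ∀ p, iasCol A p ≠ 0) {S : Set (V × Fin 3)}
    (hS : S.Finite) (h : ¬ iasIndep A S) : 2 ≤ S.ncard := by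
  by_contra! hlt
  exact h <| iasIndep_of_subsingleton hnz fun a ha b hb =>
    (Set.ncard_le_one hS).1 (by omega) a ha b hb

lemma iasIndep_pair_iff (hnz : ∀ p, iasCol A p ≠ 0) {p q : V × Fin 3} (hpq : p ≠ q) :
    iasIndep A {p, q} ↔ iasCol A p ≠ iasCol A q := by
  refine (linearIndepOn_pair_iff _ hpq (hnz p)).trans
    ⟨fun h => by simpa using h 1, fun h c => ?_⟩
  rcases zmod_two_eq_zero_or_one c with rfl | rfl
  · simpa using (hnz q).symm
  · simpa using h

lemma exists_iasCircuit_ncard_two_iff (hnz : ∀ p, iasCol A p ≠ 0) :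
    (∃ C, iasCircuit A C ∧ C.ncard = 2) ↔ ∃ p q, p ≠ q ∧ iasCol A p = iasCol A q := by
  constructor
  · rintro ⟨C, hC, hcard⟩
    obtain ⟨p, q, hpq, rfl⟩ := Set.ncard_eq_two.1 hcard
    exact ⟨p, q, hpq, not_not.1 (mt (iasIndep_pair_iff hnz hpq).2 hC.1)⟩
  · rintro ⟨p, q, hpq, h⟩
    refine ⟨{p, q}, ⟨fun hind => (iasIndep_pair_iff hnz hpq).1 hind h, fun S hS => ?_⟩,
      Set.ncard_pair hpq⟩
    have hlt := Set.ncard_lt_ncard hS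
    rw [Set.ncard_pair hpq] at hlt
    exact iasIndep_of_subsingleton hnz fun a ha b hb =>
      (Set.ncard_le_one ((Set.toFinite _).subset hS.subset)).1 (by omega) a ha b hb

lemma iasLambda_compl (S : Set (V × Fin 3)) : iasLambda A Sᶜ = iasLambda A S := by
  rw [iasLambda, iasLambda, compl_compl, add_comm]

lemma OrdinarySep.compl {m : ℕ} {S : Set (V × Fin 3)} (h : OrdinarySep A m S) :
    OrdinarySep A m Sᶜ := by
  obtain ⟨hm, hlam, hS, hSc⟩ := h
  exact ⟨hm, (iasLambda_compl S).symm ▸ hlam, hSc, (compl_compl S).symm ▸ hS⟩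

lemma exists_ordinarySep_of_iasTau_le_two (h : iasTau A ≤ 2) :
    ∃ m S, m ≤ 2 ∧ OrdinarySep A m S := by
  have hne :
      {k : ℕ∞ | ∃ m : ℕ, (m : ℕ∞) = k ∧ ∃ S, OrdinarySep A m S}.Nonempty := by
    by_contra hempty
    simp [iasTau, Set.not_nonempty_iff_eq_empty.1 hempty] at h
  obtain ⟨m, hm, S, hS⟩ := csInf_mem hne
  exact ⟨m, S, by exact_mod_cast hm.trans_le h, hS⟩

end Matroid

section Rank

open Module Submodule

lemma ncard_lt_finrank_of_single_mem {K ι : Type*} [Field K] [Finite ι] [DecidableEq ι]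
    {P : Submodule K (ι → K)} {T : Set ι} (hT : ∀ t ∈ T, Pi.single t 1 ∈ P)
    {f : ι → K} (hf : f ∈ P) {u : ι} (hu : u ∉ T) (hfu : f u ≠ 0) :
    T.ncard < finrank K P := by
  rw [← Pi.dim_spanSubset (R := K)]
  refine finrank_lt_finrank_of_lt (lt_of_le_of_ne ?_ fun heq => hfu ?_)
  · rw [Pi.spanSubset, span_le]
    rintro _ ⟨t, ht, rfl⟩
    simpa using hT t ht
  · exact Pi.mem_spanSubset_iff.1 (heq ▸ hf) u hu

variable {A : Matrix V V (ZMod 2)}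

lemma span_iasCol_eq_top_of_forall {X : Set (V × Fin 3)}
    (h : ∀ v, iasCol A (v, 0) ∈ span (ZMod 2) (iasCol A '' X)) :
    span (ZMod 2) (iasCol A '' X) = ⊤ := by
  rw [eq_top_iff, ← (Pi.basisFun (ZMod 2) V).span_eq, span_le]
  rintro _ ⟨v, rfl⟩
  simpa [iasCol_zero] using h v

lemma iasRank_univ : iasRank A Set.univ = Fintype.card V := by
  rw [iasRank, span_iasCol_eq_top_of_forall (X := Set.univ)
    fun v => subset_span ⟨(v, 0), Set.mem_univ _, rfl⟩,
    finrank_top, finrank_fintype_fun_eq_card]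

lemma iasRank_le_card (S : Set (V × Fin 3)) : iasRank A S ≤ Fintype.card V :=
  (finrank_le _).trans (finrank_fintype_fun_eq_card (ZMod 2)).le

lemma iasLambda_le_iasRank (S : Set (V × Fin 3)) : iasLambda A S ≤ iasRank A S := by
  have := iasRank_le_card (A := A) Sᶜ
  rw [iasLambda, iasRank_univ]
  omega

lemma iasLambda_eq_iasRank_of_span_compl_eq_top {S : Set (V × Fin 3)}
    (h : span (ZMod 2) (iasCol A '' Sᶜ) = ⊤) : iasLambda A S = iasRank A S := by
  have hSc : iasRank A Sᶜ = Fintype.card V := by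
    rw [iasRank, h, finrank_top, finrank_fintype_fun_eq_card]
  rw [iasLambda, iasRank_univ, hSc, Nat.add_sub_cancel]

lemma iasRank_pos (hnz : ∀ p, iasCol A p ≠ 0) {X : Set (V × Fin 3)} (hX : X.Nonempty) :
    0 < iasRank A X := by
  obtain ⟨p, hp⟩ := hX
  refine Nat.pos_of_ne_zero fun h => hnz p ?_
  rw [iasRank, finrank_eq_zero, span_eq_bot] at h
  exact h _ ⟨p, hp, rfl⟩

lemma iasCol_eq_of_iasRank_le_one (hnz : ∀ p, iasCol A p ≠ 0) {X : Set (V × Fin 3)}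
    (hX : iasRank A X ≤ 1) {p q : V × Fin 3} (hp : p ∈ X) (hq : q ∈ X) :
    iasCol A p = iasCol A q := by
  obtain ⟨v, hv⟩ := finrank_le_one_iff.1 hX
  have key : ∀ r ∈ X, (v : V → ZMod 2) = iasCol A r := fun r hr => by
    obtain ⟨c, hcv⟩ := hv ⟨_, subset_span ⟨r, hr, rfl⟩⟩
    have hcv' : c • (v : V → ZMod 2) = iasCol A r := congrArg Subtype.val hcv
    rcases zmod_two_eq_zero_or_one c with rfl | rfl
    · exact absurd (by simpa using hcv'.symm) (hnz r)
    · simpa using hcv'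
  exact (key p hp).symm.trans (key q hq)

lemma ncard_le_card_of_iasIndep {S : Set (V × Fin 3)} (h : iasIndep A S) :
    S.ncard ≤ Fintype.card V := by
  classical
  have := LinearIndependent.fintype_card_le_finrank h
  rwa [finrank_fintype_fun_eq_card, ← Nat.card_eq_fintype_card, Nat.card_coe_set_eq] at this

lemma ncard_lt_iasRank {S : Set (V × Fin 3)} {X : Set V}
    (hX : ∀ x ∈ X, ∀ j, iasCol A (x, j) ∈ span (ZMod 2) (iasCol A '' S))
    {s t : V} (ht : t ∈ X) (hs : s ∉ X) (hst : A s t = 1) : X.ncard < iasRank A S :=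
  ncard_lt_finrank_of_single_mem (fun x hx => iasCol_zero A x ▸ hX x hx 0) (hX t ht 1) hs
    (by rw [iasCol_apply_of_ne A one_ne_zero (ne_of_mem_of_not_mem ht hs).symm, hst]; decide)

lemma two_le_iasLambda (hconn : (toSimpleGraph A).Connected) {S : Set (V × Fin 3)} {P : Set V}
    (hP : P.Nonempty) (hPc : Pᶜ.Nonempty)
    (hS : ∀ x ∈ P, ∀ j, iasCol A (x, j) ∈ span (ZMod 2) (iasCol A '' S))
    (hSc : ∀ x ∉ P, ∀ j, iasCol A (x, j) ∈ span (ZMod 2) (iasCol A '' Sᶜ)) :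
    2 ≤ iasLambda A S := by
  obtain ⟨t, ht⟩ := hP
  obtain ⟨s, hs⟩ := hPc
  obtain ⟨d, -, hd, hd'⟩ := (hconn.preconnected t s).some.exists_boundary_dart P ht hs
  obtain ⟨-, hfs, hsf⟩ := d.adj
  have hrS := ncard_lt_iasRank hS hd hd' hsf
  have hrSc := ncard_lt_iasRank (X := Pᶜ) hSc hd' (not_not.2 hd) hfs
  have hcard := Set.ncard_add_ncard_compl P
  rw [Nat.card_eq_fintype_card] at hcard
  rw [iasLambda, iasRank_univ]
  omega

lemma exists_iasCol_eq_of_ordinarySep_of_span_compl_eq_top (hnz : ∀ p, iasCol A p ≠ 0)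
    {m : ℕ} {S : Set (V × Fin 3)} (hsep : OrdinarySep A m S) (hm : m ≤ 2)
    (htop : span (ZMod 2) (iasCol A '' Sᶜ) = ⊤) :
    ∃ p q, p ≠ q ∧ iasCol A p = iasCol A q := by
  obtain ⟨hm0, hlam, hS, -⟩ := hsep
  rw [iasLambda_eq_iasRank_of_span_compl_eq_top htop] at hlam
  have hpos := iasRank_pos hnz (X := S) (Set.nonempty_of_ncard_ne_zero (by omega))
  obtain ⟨p, hp, q, hq, hpq⟩ := (Set.one_lt_ncard (Set.toFinite S)).1 (by omega)
  exact ⟨p, q, hpq, iasCol_eq_of_iasRank_le_one hnz (by omega) hp hq⟩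

lemma exists_iasCol_eq_of_ordinarySep (hconn : (toSimpleGraph A).Connected)
    (hnz : ∀ p, iasCol A p ≠ 0) {m : ℕ} {S : Set (V × Fin 3)} (hsep : OrdinarySep A m S)
    (hm : m ≤ 2) : ∃ p q, p ≠ q ∧ iasCol A p = iasCol A q := by
  set P : Set V := {x | ∀ j, iasCol A (x, j) ∈ span (ZMod 2) (iasCol A '' S)}
  have hPc : ∀ x ∉ P, ∀ j, iasCol A (x, j) ∈ span (ZMod 2) (iasCol A '' Sᶜ) :=
    fun x hx => (forall_iasCol_mem_span_or_compl S x).resolve_left hx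
  rcases P.eq_empty_or_nonempty with hP | hP
  · exact exists_iasCol_eq_of_ordinarySep_of_span_compl_eq_top hnz hsep hm
      (span_iasCol_eq_top_of_forall fun x => hPc x (hP ▸ Set.notMem_empty x) 0)
  rcases Pᶜ.eq_empty_or_nonempty with hP' | hP'
  · refine exists_iasCol_eq_of_ordinarySep_of_span_compl_eq_top hnz hsep.compl hm ?_
    rw [compl_compl]
    exact span_iasCol_eq_top_of_forall fun x => (Set.compl_empty_iff.1 hP' ▸ Set.mem_univ x) 0
  · have := two_le_iasLambda hconn hP hP' (fun x hx => hx) hPc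
    have := hsep.2.1
    omega

lemma iasKappaStar_le_two_of_iasCol_eq (hn : 1 < Fintype.card V) (hnz : ∀ p, iasCol A p ≠ 0)
    {p q : V × Fin 3} (hpq : p ≠ q) (h : iasCol A p = iasCol A q) : iasKappaStar A ≤ 2 := by
  refine Nat.sInf_le (Or.inl ⟨{p, q}, two_pos, ?_,
    fun hind => (iasIndep_pair_iff hnz hpq).1 hind h, fun hind => ?_⟩)
  · have hrank : iasRank A {p, q} = 1 := by
      rw [iasRank, Set.image_pair, h, Set.pair_eq_singleton, finrank_span_singleton (hnz q)]
    have := iasLambda_le_iasRank (A := A) {p, q}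
    omega
  · have hind := ncard_le_card_of_iasIndep hind
    have hcard := Set.ncard_add_ncard_compl ({p, q} : Set (V × Fin 3))
    rw [Set.ncard_pair hpq, Nat.card_eq_fintype_card, Fintype.card_prod, Fintype.card_fin] at hcard
    omega

lemma iasTau_le_two_of_iasKappaStar_le_two (hn : 1 < Fintype.card V)
    (hnz : ∀ p, iasCol A p ≠ 0) (h : iasKappaStar A ≤ 2) : iasTau A ≤ 2 := by
  have hmem : iasKappaStar A ∈ {k : ℕ | ∃ S, CyclicSep A k S} ∪
      {3 * Fintype.card V - iasRank A Set.univ} := Nat.sInf_mem ⟨_, Or.inr rfl⟩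
  rcases hmem with ⟨S, hk, hlam, hS, hSc⟩ | hmem
  · have hsep : OrdinarySep A (iasKappaStar A) S :=
      ⟨hk, hlam, h.trans (two_le_ncard_of_not_iasIndep hnz (Set.toFinite _) hS),
        h.trans (two_le_ncard_of_not_iasIndep hnz (Set.toFinite _) hSc)⟩
    have hle : iasTau A ≤ iasKappaStar A := sInf_le ⟨_, rfl, S, hsep⟩
    exact hle.trans (by exact_mod_cast h)
  · rw [Set.mem_singleton_iff, iasRank_univ] at hmem
    omega

end Rank

theorem stmt2 (A : Matrix V V (ZMod 2)) (hA : A.IsSymm)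
    (hconn : (toSimpleGraph A).Connected) (hn : 1 < Fintype.card V) :
    List.TFAE [iasTau A ≤ 2, iasKappaStar A ≤ 2,
      ∃ C, iasCircuit A C ∧ C.ncard = 2,
      (∃ v, IsPendant A v) ∨ HasTwins A] := by
  have : Nontrivial V := Fintype.one_lt_card_iff_nontrivial.1 hn
  have hnz := iasCol_ne_zero hconn
  tfae_have 1 → 3 := fun h => by
    obtain ⟨m, S, hm, hsep⟩ := exists_ordinarySep_of_iasTau_le_two h
    exact (exists_iasCircuit_ncard_two_iff hnz).2
      (exists_iasCol_eq_of_ordinarySep hconn hnz hsep hm)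
  tfae_have 3 → 2 := fun h => by
    obtain ⟨p, q, hpq, heq⟩ := (exists_iasCircuit_ncard_two_iff hnz).1 h
    exact iasKappaStar_le_two_of_iasCol_eq hn hnz hpq heq
  tfae_have 2 → 1 := iasTau_le_two_of_iasKappaStar_le_two hn hnz
  tfae_have 3 ↔ 4 := (exists_iasCircuit_ncard_two_iff hnz).trans (exists_iasCol_eq_iff hA hnz)
  tfae_finish
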